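/- Let w_1,…,w_{n+1} ∈ ℂ with w_m ≠ u_k for all m,k, and define the (n+1)×(n+1) matrix W by W_{jℓ} := g(u_ℓ,w_j) · (∏_{i≠ℓ} g(u_ℓ,u_i)) / (∏_{m=1}^{n+1} g(u_ℓ,w_m)). Then the matrix product W·M has entries (W·M)_{jk} = (∏_{i≠k} g(u_k,u_i)) · [ Y_k(ŵ_j) − (g(u_k,w_j) / ∏_{m=1}^{n+1} g(u_k,w_m)) · (∏_{i=1}^{n} g(u_k,v_i)) · Y_k(v) ], where ŵ_j denotes the n-tuple (w_1,…,w_{n+1}) with w_j omitted. -/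

import Mathlib

/-- `g c x y = c / (x - y)`. -/
noncomputable def g (c x y : ℂ) : ℂ := c / (x - y)

/-- `esym w p` is the `p`-th elementary symmetric polynomial of the entries of `w`;
it equals `1` for `p = 0` and `0` for `p` larger than the number of entries. -/
noncomputable def esym {m : ℕ} (w : Fin m → ℂ) (p : ℕ) : ℂ :=
  ∑ s ∈ Finset.powersetCard p Finset.univ, ∏ i ∈ s, w i

/-- `Y a w = ∑_{p=0}^{n} a p * σ_p(w)`. -/
noncomputable def Y {n : ℕ} (a : Fin (n + 1) → ℂ) (w : Fin n → ℂ) : ℂ :=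
  ∑ p : Fin (n + 1), a p * esym w (p : ℕ)

/-- The matrix `M_{jk} = (∏_{i≠k} g(u_k,u_i)) Y_k(û_j) - δ_{jk} (∏_i g(u_j,v_i)) Y_j(v)`. -/
noncomputable def Mmat (c : ℂ) {n : ℕ} (u : Fin (n + 1) → ℂ) (v : Fin n → ℂ)
    (a : Fin (n + 1) → Fin (n + 1) → ℂ) : Matrix (Fin (n + 1)) (Fin (n + 1)) ℂ :=
  Matrix.of fun j k =>
    (∏ i ∈ Finset.univ.erase k, g c (u k) (u i)) * Y (fun p => a p k) (u ∘ j.succAbove)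
      - (if j = k then 1 else 0) * ((∏ i, g c (u j) (v i)) * Y (fun p => a p j) v)

/-- The `n × (n+1)` matrix `Ω_{jk} = g(u_k, v_j) * Y_k(v^{(j → u_k)})`. -/
noncomputable def Om (c : ℂ) {n : ℕ} (u : Fin (n + 1) → ℂ) (v : Fin n → ℂ)
    (a : Fin (n + 1) → Fin (n + 1) → ℂ) : Matrix (Fin n) (Fin (n + 1)) ℂ :=
  Matrix.of fun j k =>
    g c (u k) (v j) * Y (fun p => a p k) (Function.update v j (u k))

/-- `Ω̂_ℓ` : the determinant of the `n × n` matrix obtained from `Ω` by deleting column `ℓ`. -/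
noncomputable def OmHat (c : ℂ) {n : ℕ} (u : Fin (n + 1) → ℂ) (v : Fin n → ℂ)
    (a : Fin (n + 1) → Fin (n + 1) → ℂ) (ℓ : Fin (n + 1)) : ℂ :=
  ((Om c u v a).submatrix id ℓ.succAbove).det

/-- `Δ(û_ℓ) = ∏_{j > k, j ≠ ℓ, k ≠ ℓ} g(u_j, u_k)`. -/
noncomputable def DelHat (c : ℂ) {n : ℕ} (u : Fin (n + 1) → ℂ) (ℓ : Fin (n + 1)) : ℂ :=
  ∏ p ∈ Finset.univ.filter
      (fun p : Fin (n + 1) × Fin (n + 1) => p.2 < p.1 ∧ p.1 ≠ ℓ ∧ p.2 ≠ ℓ),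
    g c (u p.1) (u p.2)

/-!
Cancelling the powers of `c`, `W_{jℓ} = ∏_{m ≠ j} (u_ℓ - w_m) · ∏_{i ≠ ℓ} (u_ℓ - u_i)⁻¹`:
the value at `u_ℓ` of the degree-`n` polynomial `∏_{m ≠ j} (X - w_m)` times the `ℓ`-th Lagrange
nodal weight of the nodes `u`. Since the Lagrange basis polynomial at `u_ℓ` is that weight times
`∏_{i ≠ ℓ} (X - u_i)`, whose coefficients are `± σ_p(û_ℓ)` by Vieta, Lagrange interpolation
gives `∑_ℓ W_{jℓ} σ_p(û_ℓ) = σ_p(ŵ_j)`, hence `∑_ℓ W_{jℓ} Y_k(û_ℓ) = Y_k(ŵ_j)`. The diagonal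
part of `M` contributes `W_{jk} ∏_i g(u_k, v_i) Y_k(v)`.
-/

open Finset Polynomial Lagrange

namespace Lagrange

theorem coeff_nodal_card_sub {R ι : Type*} [CommRing R] {s : Finset ι} (v : ι → R) {p : ℕ}
    (hp : p ≤ #s) : (nodal s v).coeff (#s - p) = (-1) ^ p * (s.val.map v).esymm p := by
  have h := Multiset.prod_X_sub_C_coeff (s.val.map v) (k := #s - p) (by simp)
  simp only [Multiset.map_map, Multiset.card_map, card_val, Nat.sub_sub_self hp] at h
  exact h

variable {F ι : Type*} [Field F] [DecidableEq ι] {s : Finset ι} {v : ι → F}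

theorem coeff_eq_sum_nodalWeight (hvs : Set.InjOn v s) {f : F[X]} (hf : f.degree < #s) (k : ℕ) :
    f.coeff k = ∑ i ∈ s, f.eval (v i) * nodalWeight s v i * (nodal (s.erase i) v).coeff k := by
  conv_lhs => rw [eq_interpolate hvs hf]
  simp only [interpolate_apply, finsetSum_coeff]
  refine sum_congr rfl fun i hi => ?_
  rw [basis_eq_prod_sub_inv_mul_nodal_div hi, ← nodal_erase_eq_nodal_div hi, ← mul_assoc,
    ← C_mul, coeff_C_mul]

theorem esymm_eq_sum_nodalWeight_mul_esymm_erase (hvs : Set.InjOn v s) {κ : Type*}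
    {t : Finset κ} (hst : #s = #t + 1) (z : κ → F) {p : ℕ} (hp : p ≤ #t) :
    (t.val.map z).esymm p =
      ∑ i ∈ s, (nodal t z).eval (v i) * nodalWeight s v i * ((s.erase i).val.map v).esymm p := by
  have hdeg : (nodal t z).degree < #s := by
    rw [degree_nodal, hst]
    exact_mod_cast t.card.lt_succ_self
  have hcard : ∀ i ∈ s, #(s.erase i) = #t := fun i hi => by
    rw [card_erase_of_mem hi, hst, Nat.add_sub_cancel]
  have h := coeff_eq_sum_nodalWeight hvs hdeg (#t - p)
  rw [coeff_nodal_card_sub z hp] at h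
  apply mul_left_cancel₀ (neg_one_pow_ne_zero p : (-1 : F) ^ p ≠ 0)
  rw [h, mul_sum]
  refine sum_congr rfl fun i hi => ?_
  rw [← hcard i hi, coeff_nodal_card_sub v (hcard i hi ▸ hp)]
  ring

end Lagrange

theorem esym_eq_esymm {m : ℕ} (w : Fin m → ℂ) (p : ℕ) :
    esym w p = (univ.val.map w).esymm p := by
  rw [esymm_map_val]
  rfl

theorem esym_comp_succAbove {n : ℕ} (u : Fin (n + 1) → ℂ) (ℓ : Fin (n + 1)) (p : ℕ) :
    esym (u ∘ ℓ.succAbove) p = ((univ.erase ℓ).val.map u).esymm p := by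
  rw [esym_eq_esymm, ← Multiset.map_map, ← compl_singleton, ← Fin.image_succAbove_univ,
    image_val_of_injOn Fin.succAbove_right_injective.injOn]

theorem Y_eq_sum_nodalWeight_mul_Y {n : ℕ} {u : Fin (n + 1) → ℂ} (hu : Function.Injective u)
    (b : Fin (n + 1) → ℂ) (z : Fin n → ℂ) :
    Y b z = ∑ ℓ, (∏ m, (u ℓ - z m)) * nodalWeight univ u ℓ * Y b (u ∘ ℓ.succAbove) := by
  simp only [Y, mul_sum]
  rw [sum_comm]
  refine sum_congr rfl fun p _ => ?_
  have hp : (p : ℕ) ≤ #(univ : Finset (Fin n)) := by simpa using p.is_le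
  rw [esym_eq_esymm, esymm_eq_sum_nodalWeight_mul_esymm_erase (s := univ) hu.injOn (by simp) z hp,
    mul_sum]
  refine sum_congr rfl fun ℓ _ => ?_
  rw [esym_comp_succAbove, eval_nodal]
  ring

theorem prod_g {ι : Type*} (s : Finset ι) (c x : ℂ) (y : ι → ℂ) :
    ∏ i ∈ s, g c x (y i) = c ^ #s * ∏ i ∈ s, (x - y i)⁻¹ := by
  simp only [g, div_eq_mul_inv, prod_mul_distrib, prod_const]

theorem prod_erase_g_eq_nodalWeight {n : ℕ} (c : ℂ) (u : Fin (n + 1) → ℂ) (ℓ : Fin (n + 1)) :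
    ∏ i ∈ univ.erase ℓ, g c (u ℓ) (u i) = c ^ n * nodalWeight univ u ℓ := by
  rw [prod_g, nodalWeight, card_erase_of_mem (mem_univ ℓ), card_univ, Fintype.card_fin,
    Nat.add_sub_cancel]

theorem g_div_prod_g {c : ℂ} (hc : c ≠ 0) {n : ℕ} {x : ℂ} {y : Fin (n + 1) → ℂ}
    (hxy : ∀ m, y m ≠ x) (j : Fin (n + 1)) :
    g c x (y j) / ∏ m, g c x (y m) = (∏ m, (x - y (j.succAbove m))) / c ^ n := by
  have hg : g c x (y j) ≠ 0 := div_ne_zero hc (sub_ne_zero.mpr (hxy j).symm)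
  rw [Fin.prod_univ_succAbove _ j, div_mul_cancel_left₀ hg, prod_g, card_univ, Fintype.card_fin,
    prod_inv_distrib, mul_inv, inv_inv, div_eq_mul_inv, mul_comm]

theorem W_mul_M_entries_general (c : ℂ) (hc : c ≠ 0) (n : ℕ)
    (u : Fin (n + 1) → ℂ) (hu : Function.Injective u)
    (v : Fin n → ℂ)
    (a : Fin (n + 1) → Fin (n + 1) → ℂ)
    (w : Fin (n + 1) → ℂ) (hwu : ∀ m k : Fin (n + 1), w m ≠ u k)
    (W : Matrix (Fin (n + 1)) (Fin (n + 1)) ℂ)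
    (hW : W = Matrix.of fun j ℓ =>
      g c (u ℓ) (w j) * (∏ i ∈ Finset.univ.erase ℓ, g c (u ℓ) (u i)) /
        (∏ m, g c (u ℓ) (w m))) :
    ∀ j k : Fin (n + 1),
      (W * Mmat c u v a) j k =
        (∏ i ∈ Finset.univ.erase k, g c (u k) (u i)) *
          (Y (fun p => a p k) (w ∘ j.succAbove)
            - (g c (u k) (w j) / ∏ m, g c (u k) (w m)) *
                ((∏ i, g c (u k) (v i)) * Y (fun p => a p k) v)) := by
  intro j k
  have hW_apply : ∀ ℓ, W j ℓ = (∏ m, (u ℓ - w (j.succAbove m))) * nodalWeight univ u ℓ := by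
    intro ℓ
    rw [hW, Matrix.of_apply, mul_div_right_comm, g_div_prod_g hc (hwu · ℓ),
      prod_erase_g_eq_nodalWeight]
    field_simp
  have hW_diag : W j k = (g c (u k) (w j) / ∏ m, g c (u k) (w m)) *
      ∏ i ∈ univ.erase k, g c (u k) (u i) := by
    rw [hW, Matrix.of_apply, mul_div_right_comm]
  calc (W * Mmat c u v a) j k
      = (∏ i ∈ univ.erase k, g c (u k) (u i)) * ∑ ℓ, W j ℓ * Y (fun p => a p k) (u ∘ ℓ.succAbove)
        - W j k * ((∏ i, g c (u k) (v i)) * Y (fun p => a p k) v) := by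
        simp only [Matrix.mul_apply, Mmat, Matrix.of_apply, mul_sub, sum_sub_distrib, ite_mul,
          one_mul, zero_mul, mul_ite, mul_zero, sum_ite_eq', mem_univ, if_true,
          mul_left_comm (W j _), ← mul_sum]
    _ = _ := by
        rw [hW_diag]
        simp only [hW_apply]
        rw [Y_eq_sum_nodalWeight_mul_Y hu (fun p => a p k) (w ∘ j.succAbove)]
        simp only [Function.comp_apply]
        ring

/-- entries of the product `W · M`. -/
theorem W_mul_M_entries (c : ℂ) (hc : c ≠ 0) (n : ℕ) (hn : 1 ≤ n)
    (u : Fin (n + 1) → ℂ) (hu : Function.Injective u)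
    (v : Fin n → ℂ) (huv : ∀ (j : Fin (n + 1)) (i : Fin n), u j ≠ v i)
    (a : Fin (n + 1) → Fin (n + 1) → ℂ)
    (w : Fin (n + 1) → ℂ) (hwu : ∀ m k : Fin (n + 1), w m ≠ u k)
    (W : Matrix (Fin (n + 1)) (Fin (n + 1)) ℂ)
    (hW : W = Matrix.of fun j ℓ =>
      g c (u ℓ) (w j) * (∏ i ∈ Finset.univ.erase ℓ, g c (u ℓ) (u i)) /
        (∏ m, g c (u ℓ) (w m))) :
    ∀ j k : Fin (n + 1),
      (W * Mmat c u v a) j k =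
        (∏ i ∈ Finset.univ.erase k, g c (u k) (u i)) *
          (Y (fun p => a p k) (w ∘ j.succAbove)
            - (g c (u k) (w j) / ∏ m, g c (u k) (w m)) *
                ((∏ i, g c (u k) (v i)) * Y (fun p => a p k) v)) :=
  W_mul_M_entries_general c hc n u hu v a w hwu W hW
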